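/- In the big-M formulation of the ramp-loss problem, the valid inequality ξ_i ≤ 2(1 − z_i) for all i does not cut off any optimal solution: for every optimal solution (w*, b*, ξ*, z*) of the conditional ramp-loss problem (RL-ℓp), one has ξ_i* ≤ 2(1 − z_i*) for all i. -/

import Mathlib

/-!
At an optimum the slack ξᵢ of a point with zᵢ = 1 is zero: its margin constraint is switched off,
so lowering ξᵢ to 0 keeps the solution feasible and lowers the objective by C ξᵢ, which forces
ξᵢ ≤ 0 since C > 0. If zᵢ = 0, the inequality is just the bound ξᵢ ≤ 2.
-/

open Finset

def RampLossFeasible {n d : ℕ} (x : Fin n → Fin d → ℝ) (y : Fin n → ℝ)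
    (w : Fin d → ℝ) (b : ℝ) (ξ z : Fin n → ℝ) : Prop :=
  (∀ i, 0 ≤ ξ i ∧ ξ i ≤ 2) ∧ (∀ i, z i = 0 ∨ z i = 1) ∧
    (∀ i, z i = 0 → y i * ((∑ k, w k * x i k) + b) ≥ 1 - ξ i)

theorem Finset.sum_update_zero_add {ι M : Type*} [Fintype ι] [DecidableEq ι] [AddCommMonoid M]
    (f : ι → M) (i : ι) : ∑ j, Function.update f i 0 j + f i = ∑ j, f j := by
  rw [sum_update_of_mem (mem_univ i), sdiff_singleton_eq_erase, zero_add,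
    sum_erase_add _ _ (mem_univ i)]

theorem RampLossFeasible.update_slack_zero {n d : ℕ} {x : Fin n → Fin d → ℝ} {y : Fin n → ℝ}
    {w : Fin d → ℝ} {b : ℝ} {ξ z : Fin n → ℝ} {i : Fin n}
    (h : RampLossFeasible x y w b ξ z) (hi : z i = 1) :
    RampLossFeasible x y w b (Function.update ξ i 0) z := by
  obtain ⟨hξ, hz, hmargin⟩ := h
  refine ⟨fun j => ?_, hz, fun j hj => ?_⟩
  · rcases eq_or_ne j i with rfl | hji
    · simp
    · simpa [hji] using hξ j
  · have hji : j ≠ i := by rintro rfl; simp [hj] at hi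
    simpa [hji] using hmargin j hj

theorem rampLoss_optimal_validInequality_general
    (n d : ℕ) (x : Fin n → Fin d → ℝ) (y : Fin n → ℝ)
    (C p : ℝ) (hC : 0 < C)
    (Feasible : (Fin d → ℝ) → ℝ → (Fin n → ℝ) → (Fin n → ℝ) → Prop)
    (hFeas : ∀ w b ξ z, Feasible w b ξ z ↔
      (∀ i, 0 ≤ ξ i ∧ ξ i ≤ 2) ∧ (∀ i, z i = 0 ∨ z i = 1) ∧
      (∀ i, z i = 0 → y i * ((∑ k, w k * x i k) + b) ≥ 1 - ξ i))
    (obj : (Fin d → ℝ) → ℝ → (Fin n → ℝ) → (Fin n → ℝ) → ℝ)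
    (hobj : ∀ w b ξ z, obj w b ξ z =
      (1 / p) * (∑ k, |w k| ^ p) + C * ((∑ i, ξ i) + 2 * ∑ i, z i))
    (w' : Fin d → ℝ) (b' : ℝ) (ξ' z' : Fin n → ℝ)
    (hfeas : Feasible w' b' ξ' z')
    (hopt : ∀ w b ξ z, Feasible w b ξ z → obj w' b' ξ' z' ≤ obj w b ξ z) :
    ∀ i, ξ' i ≤ 2 * (1 - z' i) := by
  have feasible : ∀ w b ξ z, Feasible w b ξ z ↔ RampLossFeasible x y w b ξ z := hFeas
  have hfeas' := (feasible _ _ _ _).1 hfeas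
  intro i
  rcases hfeas'.2.1 i with hzi | hzi
  · linarith [(hfeas'.1 i).2]
  · have hle := hopt w' b' _ z' ((feasible _ _ _ _).2 (hfeas'.update_slack_zero hzi))
    rw [hobj, hobj] at hle
    have hpenalty := le_of_mul_le_mul_left ((add_le_add_iff_left _).1 hle) hC
    have hsum := sum_update_zero_add ξ' i
    linarith

/-- The valid inequality ξ_i ≤ 2(1 − z_i) does not cut off any optimal
solution of the conditional ramp-loss problem (RL-ℓp). -/
theorem rampLoss_optimal_validInequality
    (n d : ℕ) (x : Fin n → Fin d → ℝ) (y : Fin n → ℝ)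
    (hy : ∀ i, y i = 1 ∨ y i = -1)
    (C p : ℝ) (hC : 0 < C) (hp : 1 ≤ p)
    (Feasible : (Fin d → ℝ) → ℝ → (Fin n → ℝ) → (Fin n → ℝ) → Prop)
    (hFeas : ∀ w b ξ z, Feasible w b ξ z ↔
      (∀ i, 0 ≤ ξ i ∧ ξ i ≤ 2) ∧ (∀ i, z i = 0 ∨ z i = 1) ∧
      (∀ i, z i = 0 → y i * ((∑ k, w k * x i k) + b) ≥ 1 - ξ i))
    (obj : (Fin d → ℝ) → ℝ → (Fin n → ℝ) → (Fin n → ℝ) → ℝ)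
    (hobj : ∀ w b ξ z, obj w b ξ z =
      (1 / p) * (∑ k, |w k| ^ p) + C * ((∑ i, ξ i) + 2 * ∑ i, z i))
    (w' : Fin d → ℝ) (b' : ℝ) (ξ' z' : Fin n → ℝ)
    (hfeas : Feasible w' b' ξ' z')
    (hopt : ∀ w b ξ z, Feasible w b ξ z → obj w' b' ξ' z' ≤ obj w b ξ z) :
    ∀ i, ξ' i ≤ 2 * (1 - z' i) :=
  rampLoss_optimal_validInequality_general n d x y C p hC Feasible hFeas obj hobj w' b' ξ' z' hfeas
    hopt
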